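/- Error propagation for the inverse-side solution: let D satisfy (dD/dΓ)·B + D·X = 0, D_0 = 1, and let 𝒟 be a matrix polynomial with 𝒟_0 = 1 satisfying (d𝒟/dΓ)·B·B_0^{-1} + 𝒟·X·B_0^{-1} = p^ε·ℰ for some matrix series ℰ with integral coefficients (ord(ℰ) ≥ 0). Assume ord(B) ≥ -α, ord(B^{-1}) ≥ -α, ord(B_0) ≥ -α, and that D, D^{-1} have (γ,δ)-log convergence. Then p^{-ε}(𝒟 - D) = (∫ ℰ·B_0·B^{-1}·D^{-1} dΓ)·D, and consequently p^{-ε}(𝒟 - D) has (2γ+1, 2(α+δ))-log convergence. -/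

import Mathlib

open scoped BigOperators

variable {K : Type*} [Field K] {d : ℕ}

/-- Coefficientwise (Cauchy) product of two matrix power series over `K[[Γ]]`. -/
def mulC (A B : ℕ → Matrix (Fin d) (Fin d) K) : ℕ → Matrix (Fin d) (Fin d) K :=
  fun k => ∑ ab ∈ Finset.HasAntidiagonal.antidiagonal k, A ab.1 * B ab.2

/-- Coefficients of the formal derivative `dK/dΓ`. -/
def derivC (A : ℕ → Matrix (Fin d) (Fin d) K) : ℕ → Matrix (Fin d) (Fin d) K :=
  fun k => ((k : K) + 1) • A (k + 1)

/-- The power series `1`. -/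
def oneC : ℕ → Matrix (Fin d) (Fin d) K := fun k => if k = 0 then 1 else 0

/-- Coefficients of the formal integral (with constant term `0`). -/
def integC (A : ℕ → Matrix (Fin d) (Fin d) K) : ℕ → Matrix (Fin d) (Fin d) K
  | 0 => 0
  | (k + 1) => (((k : K) + 1)⁻¹) • A k

/-- A matrix power series `∑ Aᵢ Γⁱ` is `(x,y)`-log convergent if
`ord(Aᵢ) ≥ -x⌈log_p(i+1)⌉ - y` for all `i`. -/
def LogConv (p : ℕ) (ord : K → WithTop ℝ)
    (A : ℕ → Matrix (Fin d) (Fin d) K) (x y : ℝ) : Prop :=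
  ∀ (k : ℕ) (i j : Fin d),
    ((-x * (⌈Real.logb p ((k : ℝ) + 1)⌉ : ℝ) - y : ℝ) : WithTop ℝ) ≤ ord (A k i j)

section Aux

open PowerSeries

lemma coeff_mk_mul (A B : ℕ → Matrix (Fin d) (Fin d) K) (k : ℕ) :
    (PowerSeries.coeff k) (PowerSeries.mk A * PowerSeries.mk B) = mulC A B k := by
  rw [PowerSeries.coeff_mul]
  simp [mulC, PowerSeries.coeff_mk]

lemma mk_mulC (A B : ℕ → Matrix (Fin d) (Fin d) K) :
    PowerSeries.mk (mulC A B) = PowerSeries.mk A * PowerSeries.mk B := by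
  ext k
  rw [PowerSeries.coeff_mk, coeff_mk_mul]

/-- The formal derivative at the power-series level. -/
noncomputable def dPS (f : PowerSeries (Matrix (Fin d) (Fin d) K)) :
    PowerSeries (Matrix (Fin d) (Fin d) K) :=
  PowerSeries.mk fun n => ((n : K) + 1) • (PowerSeries.coeff (n + 1) f)

lemma coeff_dPS (f : PowerSeries (Matrix (Fin d) (Fin d) K)) (k : ℕ) :
    PowerSeries.coeff k (dPS f) = ((k : K) + 1) • (PowerSeries.coeff (k + 1) f) :=
  PowerSeries.coeff_mk _ _

lemma mk_derivC (A : ℕ → Matrix (Fin d) (Fin d) K) :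
    PowerSeries.mk (derivC A) = dPS (PowerSeries.mk A) := by
  ext k
  rw [PowerSeries.coeff_mk, coeff_dPS, PowerSeries.coeff_mk, derivC]

lemma dPS_one : dPS (1 : PowerSeries (Matrix (Fin d) (Fin d) K)) = 0 := by
  ext k
  rw [coeff_dPS, PowerSeries.coeff_one]
  simp

/-- Leibniz rule. -/
lemma dPS_mul (f g : PowerSeries (Matrix (Fin d) (Fin d) K)) :
    dPS (f * g) = dPS f * g + f * dPS g := by
  refine PowerSeries.ext fun n => ?_
  rw [map_add, coeff_dPS, PowerSeries.coeff_mul, PowerSeries.coeff_mul,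
    PowerSeries.coeff_mul, Finset.smul_sum]
  have step1 : ∑ ab ∈ Finset.HasAntidiagonal.antidiagonal (n + 1),
      ((n : K) + 1) • (PowerSeries.coeff ab.1 f * PowerSeries.coeff ab.2 g)
      = (∑ ab ∈ Finset.HasAntidiagonal.antidiagonal (n + 1),
          (ab.1 : K) • (PowerSeries.coeff ab.1 f * PowerSeries.coeff ab.2 g))
        + ∑ ab ∈ Finset.HasAntidiagonal.antidiagonal (n + 1),
          (ab.2 : K) • (PowerSeries.coeff ab.1 f * PowerSeries.coeff ab.2 g) := by
    rw [← Finset.sum_add_distrib]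
    refine Finset.sum_congr rfl fun ab hab => ?_
    rw [← add_smul]
    congr 1
    have h := Finset.HasAntidiagonal.mem_antidiagonal.mp hab
    have : ((ab.1 + ab.2 : ℕ) : K) = ((n + 1 : ℕ) : K) := by rw [h]
    push_cast at this
    linear_combination -this
  rw [step1]
  congr 1
  · rw [Finset.Nat.sum_antidiagonal_succ]
    simp only [Nat.cast_zero, zero_smul, zero_add]
    refine Finset.sum_congr rfl fun ab _ => ?_
    rw [coeff_dPS, smul_mul_assoc]
    congr 1
    push_cast
    ring
  · rw [Finset.Nat.sum_antidiagonal_succ']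
    simp only [Nat.cast_zero, zero_smul, zero_add]
    refine Finset.sum_congr rfl fun ab _ => ?_
    rw [coeff_dPS, mul_smul_comm]
    congr 1
    push_cast
    ring

/-- The formal integral at the power-series level. -/
noncomputable def iPS (f : PowerSeries (Matrix (Fin d) (Fin d) K)) :
    PowerSeries (Matrix (Fin d) (Fin d) K) :=
  PowerSeries.mk (integC fun n => PowerSeries.coeff n f)

lemma mk_integC (A : ℕ → Matrix (Fin d) (Fin d) K) :
    PowerSeries.mk (integC A) = iPS (PowerSeries.mk A) := by
  have : (fun n => PowerSeries.coeff n (PowerSeries.mk A)) = A := by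
    funext n; exact PowerSeries.coeff_mk _ _
  rw [iPS, this]

lemma eq_iPS_dPS [CharZero K] (f : PowerSeries (Matrix (Fin d) (Fin d) K))
    (h0 : PowerSeries.coeff 0 f = 0) : f = iPS (dPS f) := by
  ext k
  rw [iPS, PowerSeries.coeff_mk]
  match k with
  | 0 => rw [integC, h0]
  | (n + 1) =>
    rw [integC, coeff_dPS, smul_smul, inv_mul_cancel₀ (Nat.cast_add_one_ne_zero n), one_smul]

end Aux

section Ord

variable (ord : K → WithTop ℝ)

lemma ordSum (hord0 : ord 0 = ⊤) (hadd : ∀ a b : K, min (ord a) (ord b) ≤ ord (a + b))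
    {ι : Type*} (s : Finset ι) (f : ι → K) (c : WithTop ℝ)
    (h : ∀ x ∈ s, c ≤ ord (f x)) : c ≤ ord (∑ x ∈ s, f x) := by
  induction s using Finset.cons_induction with
  | empty => simp [hord0]
  | cons a s ha ih =>
    rw [Finset.sum_cons]
    refine le_trans (le_min (h a (Finset.mem_cons_self a s)) ?_) (hadd _ _)
    exact ih fun x hx => h x (Finset.mem_cons_of_mem hx)

lemma ord_one (hmul : ∀ a b : K, ord (a * b) = ord a + ord b) {p : ℕ}
    (hordp : ord (p : K) = ((1 : ℝ) : WithTop ℝ)) : ord (1 : K) = 0 := by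
  have h := hmul (p : K) 1
  rw [mul_one, hordp] at h
  cases ho : ord (1 : K) with
  | top => rw [ho] at h; simp at h
  | coe r =>
    rw [ho, ← WithTop.coe_add] at h
    have : (1 : ℝ) = 1 + r := WithTop.coe_inj.mp h
    have : r = 0 := by linarith
    rw [this]
    rfl

/-- `ord ((k+1)⁻¹) ≥ -log_p (k+1)`. -/
lemma ord_inv_nat [CharZero K] (hmul : ∀ a b : K, ord (a * b) = ord a + ord b) {p : ℕ}
    (hordp : ord (p : K) = ((1 : ℝ) : WithTop ℝ))
    (hnat : ∀ k : ℕ, ord ((k : K) + 1) ≤ ((Real.logb p ((k : ℝ) + 1) : ℝ) : WithTop ℝ))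
    (k : ℕ) :
    ((-(Real.logb p ((k : ℝ) + 1)) : ℝ) : WithTop ℝ) ≤ ord (((k : K) + 1)⁻¹) := by
  have hne : ((k : K) + 1) ≠ 0 := Nat.cast_add_one_ne_zero k
  have hmm := hmul ((k : K) + 1) ((k : K) + 1)⁻¹
  rw [mul_inv_cancel₀ hne, ord_one ord hmul hordp] at hmm
  have hle := hnat k
  have hfin : ord ((k : K) + 1) ≠ ⊤ := by
    intro h; rw [h, top_add] at hmm; exact (by simp : (0 : WithTop ℝ) ≠ ⊤) hmm
  have hfin' : ord (((k : K) + 1)⁻¹) ≠ ⊤ := by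
    intro h; rw [h, add_top] at hmm; exact (by simp : (0 : WithTop ℝ) ≠ ⊤) hmm
  obtain ⟨u, hu⟩ := WithTop.ne_top_iff_exists.mp hfin
  obtain ⟨v, hv⟩ := WithTop.ne_top_iff_exists.mp hfin'
  rw [← hu, ← hv, ← WithTop.coe_add] at hmm
  have huv : u + v = 0 := by exact_mod_cast hmm.symm
  rw [← hu] at hle
  have hur : u ≤ Real.logb p ((k : ℝ) + 1) := WithTop.coe_le_coe.mp hle
  rw [← hv]
  exact WithTop.coe_le_coe.mpr (by linarith)

variable {p : ℕ}

lemma logConv_mono (hp : 1 < (p : ℝ)) {A : ℕ → Matrix (Fin d) (Fin d) K} {x y x' y' : ℝ}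
    (hxx : x ≤ x') (hyy : y ≤ y') (hA : LogConv p ord A x y) : LogConv p ord A x' y' := by
  intro k i j
  refine le_trans ?_ (hA k i j)
  apply WithTop.coe_le_coe.mpr
  have hc : (0 : ℝ) ≤ (⌈Real.logb p ((k : ℝ) + 1)⌉ : ℝ) := by
    have := Real.logb_nonneg hp (by push_cast; linarith [Nat.cast_nonneg (α := ℝ) k] :
      (1 : ℝ) ≤ (k : ℝ) + 1)
    exact_mod_cast Int.ceil_nonneg this
  nlinarith [mul_le_mul_of_nonneg_right hxx hc]

lemma logConv_mulC (hp : 1 < (p : ℝ)) (hord0 : ord 0 = ⊤)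
    (hmul : ∀ a b : K, ord (a * b) = ord a + ord b)
    (hadd : ∀ a b : K, min (ord a) (ord b) ≤ ord (a + b))
    {A B : ℕ → Matrix (Fin d) (Fin d) K} {x y x' y' : ℝ}
    (hx : 0 ≤ x) (hx' : 0 ≤ x')
    (hA : LogConv p ord A x y) (hB : LogConv p ord B x' y') :
    LogConv p ord (mulC A B) (x + x') (y + y') := by
  intro k i j
  rw [mulC, Matrix.sum_apply]
  refine ordSum ord hord0 hadd _ _ _ fun ab hab => ?_
  rw [Matrix.mul_apply]
  refine ordSum ord hord0 hadd _ _ _ fun l _ => ?_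
  rw [hmul]
  have hbd := Finset.HasAntidiagonal.mem_antidiagonal.mp hab
  have h1 := hA ab.1 i l
  have h2 := hB ab.2 l j
  have hceil : ∀ a : ℕ, a ≤ k →
      (⌈Real.logb p ((a : ℝ) + 1)⌉ : ℝ) ≤ (⌈Real.logb p ((k : ℝ) + 1)⌉ : ℝ) := by
    intro a hak
    have : Real.logb p ((a : ℝ) + 1) ≤ Real.logb p ((k : ℝ) + 1) :=
      Real.logb_le_logb_of_le hp (by positivity) (by exact_mod_cast by omega)
    exact_mod_cast Int.ceil_le_ceil this
  have ha1 := hceil ab.1 (by omega)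
  have ha2 := hceil ab.2 (by omega)
  calc ((-(x + x') * (⌈Real.logb p ((k : ℝ) + 1)⌉ : ℝ) - (y + y') : ℝ) : WithTop ℝ)
      ≤ (((-x * (⌈Real.logb p ((ab.1 : ℝ) + 1)⌉ : ℝ) - y)
          + (-x' * (⌈Real.logb p ((ab.2 : ℝ) + 1)⌉ : ℝ) - y') : ℝ) : WithTop ℝ) := by
        apply WithTop.coe_le_coe.mpr
        nlinarith [mul_le_mul_of_nonneg_left ha1 hx, mul_le_mul_of_nonneg_left ha2 hx']
    _ = ((-x * (⌈Real.logb p ((ab.1 : ℝ) + 1)⌉ : ℝ) - y : ℝ) : WithTop ℝ)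
          + ((-x' * (⌈Real.logb p ((ab.2 : ℝ) + 1)⌉ : ℝ) - y' : ℝ) : WithTop ℝ) :=
        WithTop.coe_add _ _
    _ ≤ ord (A ab.1 i l) + ord (B ab.2 l j) := add_le_add h1 h2

lemma logConv_integC [CharZero K] (hp : 1 < (p : ℝ)) (hord0 : ord 0 = ⊤)
    (hmul : ∀ a b : K, ord (a * b) = ord a + ord b)
    (hordp : ord (p : K) = ((1 : ℝ) : WithTop ℝ))
    (hnat : ∀ k : ℕ, ord ((k : K) + 1) ≤ ((Real.logb p ((k : ℝ) + 1) : ℝ) : WithTop ℝ))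
    {A : ℕ → Matrix (Fin d) (Fin d) K} {x y : ℝ} (hx : 0 ≤ x)
    (hA : LogConv p ord A x y) : LogConv p ord (integC A) (x + 1) y := by
  intro k i j
  match k with
  | 0 => rw [integC, Matrix.zero_apply, hord0]; exact le_top
  | (n + 1) =>
    have hentry : integC A (n + 1) i j = ((n : K) + 1)⁻¹ * A n i j := by
      rw [integC, Matrix.smul_apply, smul_eq_mul]
    rw [hentry, hmul]
    have h1 := ord_inv_nat ord hmul hordp hnat n
    have h2 := hA n i j
    have hmono : Real.logb p ((n : ℝ) + 1) ≤ Real.logb p ((n : ℝ) + 1 + 1) := by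
      have h0 : (0 : ℝ) < (n : ℝ) + 1 := by positivity
      exact Real.logb_le_logb_of_le hp h0 (by linarith)
    have hlogle : Real.logb p ((n : ℝ) + 1) ≤ (⌈Real.logb p ((n : ℝ) + 1 + 1)⌉ : ℝ) :=
      le_trans hmono (Int.le_ceil _)
    have hceil : (⌈Real.logb p ((n : ℝ) + 1)⌉ : ℝ) ≤ (⌈Real.logb p ((n : ℝ) + 1 + 1)⌉ : ℝ) := by
      exact_mod_cast Int.ceil_le_ceil hmono
    calc ((-(x + 1) * (⌈Real.logb p (((n + 1 : ℕ) : ℝ) + 1)⌉ : ℝ) - y : ℝ) : WithTop ℝ)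
        ≤ ((-(Real.logb p ((n : ℝ) + 1))
            + (-x * (⌈Real.logb p ((n : ℝ) + 1)⌉ : ℝ) - y) : ℝ) : WithTop ℝ) := by
          apply WithTop.coe_le_coe.mpr
          push_cast
          nlinarith [mul_le_mul_of_nonneg_left hceil hx, hlogle]
      _ = ((-(Real.logb p ((n : ℝ) + 1)) : ℝ) : WithTop ℝ)
            + ((-x * (⌈Real.logb p ((n : ℝ) + 1)⌉ : ℝ) - y : ℝ) : WithTop ℝ) :=
          WithTop.coe_add _ _
      _ ≤ _ := add_le_add h1 h2

end Ord

/-- error propagation for the inverse-side solution: if `D` solves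
`(dD/dΓ)·B + D·X = 0`, `D₀ = 1`, and the approximation `𝒟` (a matrix polynomial with
`𝒟₀ = 1`) satisfies `(d𝒟/dΓ)·B·B₀⁻¹ + 𝒟·X·B₀⁻¹ = pᵉ·ℰ` with `ℰ` integral, where
`ord(B), ord(B⁻¹), ord(B₀) ≥ -α` and `D, D⁻¹` are `(γ,δ)`-log convergent, then
`p^{-ε}(𝒟 - D) = (∫ ℰ·B₀·B⁻¹·D⁻¹ dΓ)·D`, and consequently `p^{-ε}(𝒟 - D)` is
`(2γ+1, 2(α+δ))`-log convergent. -/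
theorem error_propagation [CharZero K] (p : ℕ) (hp : p.Prime) (ε : ℕ)
    (ord : K → WithTop ℝ)
    (hord0 : ord 0 = ⊤)
    (hmul : ∀ a b : K, ord (a * b) = ord a + ord b)
    (hadd : ∀ a b : K, min (ord a) (ord b) ≤ ord (a + b))
    (hordp : ord (p : K) = ((1 : ℝ) : WithTop ℝ))
    (hordpinv : ord ((p : K)⁻¹) = ((-1 : ℝ) : WithTop ℝ))
    (hnat : ∀ k : ℕ, ord ((k : K) + 1) ≤ ((Real.logb p ((k : ℝ) + 1) : ℝ) : WithTop ℝ))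
    (α γ δ : ℝ) (hγ : 0 ≤ γ) (hα : 0 ≤ α)
    (B X : ℕ → Matrix (Fin d) (Fin d) K)
    (hBpoly : ∃ N, ∀ k > N, B k = 0) (hXpoly : ∃ N, ∀ k > N, X k = 0)
    (B0inv : Matrix (Fin d) (Fin d) K)
    (hB0 : B 0 * B0inv = 1) (hB0' : B0inv * B 0 = 1)
    (Binv : ℕ → Matrix (Fin d) (Fin d) K)
    (hBinv : mulC B Binv = oneC) (hBinv' : mulC Binv B = oneC)
    (hordB : ∀ k i j, ((-α : ℝ) : WithTop ℝ) ≤ ord (B k i j))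
    (hordBinv : ∀ k i j, ((-α : ℝ) : WithTop ℝ) ≤ ord (Binv k i j))
    (D Dinv : ℕ → Matrix (Fin d) (Fin d) K)
    (hD : ∀ k, mulC (derivC D) B k + mulC D X k = 0) (hD0 : D 0 = 1)
    (hDinv : mulC D Dinv = oneC) (hDinv' : mulC Dinv D = oneC)
    (hlogD : LogConv p ord D γ δ) (hlogDinv : LogConv p ord Dinv γ δ)
    (Dc E : ℕ → Matrix (Fin d) (Fin d) K)
    (hDc0 : Dc 0 = 1) (hDcpoly : ∃ N, ∀ k > N, Dc k = 0)
    (hE : ∀ k i j, (0 : WithTop ℝ) ≤ ord (E k i j))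
    (hDcEq : ∀ k, mulC (derivC Dc) B k * B0inv + mulC Dc X k * B0inv = (p : K) ^ ε • E k) :
    (∀ k, ((p : K) ^ ε)⁻¹ • (Dc k - D k) =
        mulC (integC (mulC (mulC (fun n => E n * B 0) Binv) Dinv)) D k) ∧
    LogConv p ord (fun k => ((p : K) ^ ε)⁻¹ • (Dc k - D k)) (2 * γ + 1) (2 * (α + δ)) := by
  classical
  have hpK : ((p : K) ^ ε) ≠ 0 := pow_ne_zero _ (Nat.cast_ne_zero.mpr hp.ne_zero)
  set G : ℕ → Matrix (Fin d) (Fin d) K := fun n => ((p : K) ^ ε)⁻¹ • (Dc n - D n) with hGdef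
  -- Step 1: coefficientwise ODE for G
  have h1 : ∀ k, mulC (derivC Dc) B k + mulC Dc X k = (p : K) ^ ε • (E k * B 0) := by
    intro k
    have h := congrArg (fun M => M * B 0) (hDcEq k)
    simpa only [add_mul, mul_assoc, hB0', mul_one, smul_mul_assoc] using h
  have hG : ∀ k, mulC (derivC G) B k + mulC G X k = E k * B 0 := by
    intro k
    have e1 : mulC (derivC G) B k
        = ((p : K) ^ ε)⁻¹ • (mulC (derivC Dc) B k - mulC (derivC D) B k) := by
      simp [mulC, derivC, hGdef, smul_sub, smul_smul, smul_mul_assoc, sub_mul,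
        Finset.smul_sum, Finset.sum_sub_distrib, mul_comm]
    have e2 : mulC G X k = ((p : K) ^ ε)⁻¹ • (mulC Dc X k - mulC D X k) := by
      simp [mulC, hGdef, smul_sub, smul_mul_assoc, sub_mul, Finset.smul_sum,
        Finset.sum_sub_distrib]
    rw [e1, e2, ← smul_add, sub_add_sub_comm, h1 k, hD k, sub_zero, smul_smul,
      inv_mul_cancel₀ hpK, one_smul]
  -- Step 2: transfer to power series
  have hBPS : PowerSeries.mk B * PowerSeries.mk Binv = 1 := by
    refine PowerSeries.ext fun n => ?_
    rw [coeff_mk_mul, hBinv, PowerSeries.coeff_one, oneC]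
  have hDinvPS : PowerSeries.mk D * PowerSeries.mk Dinv = 1 := by
    refine PowerSeries.ext fun n => ?_
    rw [coeff_mk_mul, hDinv, PowerSeries.coeff_one, oneC]
  have hDinv'PS : PowerSeries.mk Dinv * PowerSeries.mk D = 1 := by
    refine PowerSeries.ext fun n => ?_
    rw [coeff_mk_mul, hDinv', PowerSeries.coeff_one, oneC]
  have hDPS : dPS (PowerSeries.mk D) * PowerSeries.mk B
      + PowerSeries.mk D * PowerSeries.mk X = 0 := by
    refine PowerSeries.ext fun n => ?_
    rw [map_add, ← mk_derivC, coeff_mk_mul, coeff_mk_mul, map_zero]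
    exact hD n
  have hGPS : dPS (PowerSeries.mk G) * PowerSeries.mk B
      + PowerSeries.mk G * PowerSeries.mk X = PowerSeries.mk (fun n => E n * B 0) := by
    refine PowerSeries.ext fun n => ?_
    rw [map_add, ← mk_derivC, coeff_mk_mul, coeff_mk_mul, PowerSeries.coeff_mk]
    exact hG n
  -- Step 3: power series algebra
  have eD : dPS (PowerSeries.mk D)
      = -(PowerSeries.mk D * PowerSeries.mk X * PowerSeries.mk Binv) := by
    have h2 : dPS (PowerSeries.mk D) * PowerSeries.mk B
        = -(PowerSeries.mk D * PowerSeries.mk X) := eq_neg_of_add_eq_zero_left hDPS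
    calc dPS (PowerSeries.mk D)
        = dPS (PowerSeries.mk D) * (PowerSeries.mk B * PowerSeries.mk Binv) := by
          rw [hBPS, mul_one]
      _ = dPS (PowerSeries.mk D) * PowerSeries.mk B * PowerSeries.mk Binv := by
          rw [mul_assoc]
      _ = -(PowerSeries.mk D * PowerSeries.mk X) * PowerSeries.mk Binv := by rw [h2]
      _ = -(PowerSeries.mk D * PowerSeries.mk X * PowerSeries.mk Binv) := by rw [neg_mul]
  have eDinv : dPS (PowerSeries.mk Dinv)
      = PowerSeries.mk X * PowerSeries.mk Binv * PowerSeries.mk Dinv := by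
    have h0 : dPS (PowerSeries.mk Dinv) * PowerSeries.mk D
        + PowerSeries.mk Dinv * dPS (PowerSeries.mk D) = 0 := by
      rw [← dPS_mul, hDinv'PS, dPS_one]
    have h2 : dPS (PowerSeries.mk Dinv) * PowerSeries.mk D
        = -(PowerSeries.mk Dinv * dPS (PowerSeries.mk D)) := eq_neg_of_add_eq_zero_left h0
    calc dPS (PowerSeries.mk Dinv)
        = dPS (PowerSeries.mk Dinv) * (PowerSeries.mk D * PowerSeries.mk Dinv) := by
          rw [hDinvPS, mul_one]
      _ = dPS (PowerSeries.mk Dinv) * PowerSeries.mk D * PowerSeries.mk Dinv := by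
          rw [mul_assoc]
      _ = -(PowerSeries.mk Dinv * dPS (PowerSeries.mk D)) * PowerSeries.mk Dinv := by rw [h2]
      _ = -(PowerSeries.mk Dinv
            * -(PowerSeries.mk D * PowerSeries.mk X * PowerSeries.mk Binv))
            * PowerSeries.mk Dinv := by rw [eD]
      _ = PowerSeries.mk Dinv * PowerSeries.mk D
            * (PowerSeries.mk X * PowerSeries.mk Binv * PowerSeries.mk Dinv) := by
          noncomm_ring
      _ = PowerSeries.mk X * PowerSeries.mk Binv * PowerSeries.mk Dinv := by
          rw [hDinv'PS, one_mul]
  have eG : dPS (PowerSeries.mk G)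
      = (PowerSeries.mk (fun n => E n * B 0) - PowerSeries.mk G * PowerSeries.mk X)
        * PowerSeries.mk Binv := by
    have h2 : dPS (PowerSeries.mk G) * PowerSeries.mk B
        = PowerSeries.mk (fun n => E n * B 0) - PowerSeries.mk G * PowerSeries.mk X :=
      eq_sub_of_add_eq hGPS
    calc dPS (PowerSeries.mk G)
        = dPS (PowerSeries.mk G) * (PowerSeries.mk B * PowerSeries.mk Binv) := by
          rw [hBPS, mul_one]
      _ = dPS (PowerSeries.mk G) * PowerSeries.mk B * PowerSeries.mk Binv := by
          rw [mul_assoc]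
      _ = _ := by rw [h2]
  have hH0 : PowerSeries.coeff 0 (PowerSeries.mk G * PowerSeries.mk Dinv) = 0 := by
    rw [coeff_mk_mul]
    simp [mulC, hGdef, hDc0, hD0]
  have keyH : PowerSeries.mk G * PowerSeries.mk Dinv
      = iPS (PowerSeries.mk (fun n => E n * B 0) * PowerSeries.mk Binv
          * PowerSeries.mk Dinv) := by
    have hiden : dPS (PowerSeries.mk G * PowerSeries.mk Dinv)
        = PowerSeries.mk (fun n => E n * B 0) * PowerSeries.mk Binv * PowerSeries.mk Dinv := by
      rw [dPS_mul, eG, eDinv]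
      noncomm_ring
    conv_lhs => rw [eq_iPS_dPS _ hH0, hiden]
  have final : PowerSeries.mk G
      = iPS (PowerSeries.mk (fun n => E n * B 0) * PowerSeries.mk Binv
          * PowerSeries.mk Dinv) * PowerSeries.mk D := by
    calc PowerSeries.mk G
        = PowerSeries.mk G * (PowerSeries.mk Dinv * PowerSeries.mk D) := by
          rw [hDinv'PS, mul_one]
      _ = PowerSeries.mk G * PowerSeries.mk Dinv * PowerSeries.mk D := by rw [mul_assoc]
      _ = _ := by rw [keyH]
  -- Step 4: part 1
  have part1 : ∀ k, G k
      = mulC (integC (mulC (mulC (fun n => E n * B 0) Binv) Dinv)) D k := by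
    intro k
    have h5 : PowerSeries.mk (integC (mulC (mulC (fun n => E n * B 0) Binv) Dinv))
        = iPS (PowerSeries.mk (fun n => E n * B 0) * PowerSeries.mk Binv
            * PowerSeries.mk Dinv) := by
      rw [mk_integC, mk_mulC, mk_mulC]
    calc G k = PowerSeries.coeff k (PowerSeries.mk G) := (PowerSeries.coeff_mk _ _).symm
      _ = PowerSeries.coeff k (PowerSeries.mk
            (integC (mulC (mulC (fun n => E n * B 0) Binv) Dinv)) * PowerSeries.mk D) := by
          rw [final, h5]
      _ = mulC (integC (mulC (mulC (fun n => E n * B 0) Binv) Dinv)) D k :=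
          coeff_mk_mul _ _ _
  -- Step 5: part 2
  have hpR : 1 < (p : ℝ) := by exact_mod_cast hp.one_lt
  have lE : LogConv p ord (fun n => E n * B 0) 0 α := by
    intro k i j
    show _ ≤ ord ((E k * B 0) i j)
    rw [Matrix.mul_apply]
    refine ordSum ord hord0 hadd _ _ _ fun l _ => ?_
    rw [hmul]
    have heq : ((-0 * (⌈Real.logb p ((k : ℝ) + 1)⌉ : ℝ) - α : ℝ) : WithTop ℝ)
        = (0 : WithTop ℝ) + ((-α : ℝ) : WithTop ℝ) := by norm_num
    rw [heq]
    exact add_le_add (hE k i l) (hordB 0 l j)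
  have lBinv : LogConv p ord Binv 0 α := by
    intro k i j
    refine le_trans (le_of_eq ?_) (hordBinv k i j)
    norm_num
  have l1 := logConv_mulC ord hpR hord0 hmul hadd le_rfl le_rfl lE lBinv
  have l2 := logConv_mulC ord hpR hord0 hmul hadd (by norm_num) hγ l1 hlogDinv
  have l3 := logConv_integC ord hpR hord0 hmul hordp hnat (by linarith) l2
  have l4 := logConv_mulC ord hpR hord0 hmul hadd (by linarith) hγ l3 hlogD
  refine ⟨part1, ?_⟩
  have hfun : (fun k => ((p : K) ^ ε)⁻¹ • (Dc k - D k))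
      = mulC (integC (mulC (mulC (fun n => E n * B 0) Binv) Dinv)) D := funext part1
  rw [hGdef, hfun]
  exact logConv_mono ord hpR (by linarith) (by linarith) l4
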